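/- Let n ≥ 1, let Γ be a finitely generated group and ρ : Γ → GL_n(ℝ) a linear representation, and equip G = ℝ^n ⋊_ρ Γ with the word length |·|_S associated to a compact symmetric generating set S containing the identity. If γ ∈ Γ and v ∈ ℝ^n with v ≠ 0 satisfy ρ(γ)·v = λ·v for some real number λ with |λ| > 1, then v is exponentially distorted in G: there exists C > 0 such that |(m·v, 1)|_S ≤ C·log m for all integers m ≥ 2. -/

import Mathlib

/-!
The line `t ↦ (t • v, 1)` is a continuous one-parameter subgroup of `G`, and every `S ^ m` is
compact, hence closed. By Baire's theorem some `S ^ m` contains a whole interval of this line, and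
subadditivity of the word length then bounds `|(t • v, 1)|_S` uniformly for `t` in any bounded set.
Conjugating by `(0, γ ^ k)` multiplies `t` by `λ ^ k` at a cost of at most `2 k |(0, γ)|_S`; writing
`m = λ ^ k t` with `|t| ≤ |λ|` and `k ≤ log m / log |λ|` gives the logarithmic bound.
-/

open Matrix Pointwise

noncomputable section

/-- The automorphism of `Multiplicative ℝ^n` given by a matrix in `GL_n(ℝ)`. -/
def glAut {n : ℕ} (A : GL (Fin n) ℝ) :
    MulAut (Multiplicative (Fin n → ℝ)) :=
  AddEquiv.toMultiplicative
    { toFun := fun v => (A : Matrix (Fin n) (Fin n) ℝ).mulVec v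
      invFun := fun v => ((A⁻¹ : GL (Fin n) ℝ) : Matrix (Fin n) (Fin n) ℝ).mulVec v
      left_inv := fun v => by
        show ((A⁻¹ : GL (Fin n) ℝ) : Matrix (Fin n) (Fin n) ℝ).mulVec
          ((A : Matrix (Fin n) (Fin n) ℝ).mulVec v) = v
        rw [Matrix.mulVec_mulVec, ← Units.val_mul, inv_mul_cancel, Units.val_one,
          Matrix.one_mulVec]
      right_inv := fun v => by
        show ((A : GL (Fin n) ℝ) : Matrix (Fin n) (Fin n) ℝ).mulVec
          (((A⁻¹ : GL (Fin n) ℝ) : Matrix (Fin n) (Fin n) ℝ).mulVec v) = v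
        rw [Matrix.mulVec_mulVec, ← Units.val_mul, mul_inv_cancel, Units.val_one,
          Matrix.one_mulVec]
      map_add' := fun v w => by simp [Matrix.mulVec_add] }

/-- The action of `GL_n(ℝ)` on `Multiplicative ℝ^n`, as a homomorphism to the
automorphism group. -/
def glHom {n : ℕ} : GL (Fin n) ℝ →* MulAut (Multiplicative (Fin n → ℝ)) where
  toFun := glAut
  map_one' := by
    apply DFunLike.ext
    intro v
    show ((1 : GL (Fin n) ℝ) : Matrix (Fin n) (Fin n) ℝ).mulVec v = v
    simp
    exact Matrix.one_mulVec _
  map_mul' := fun A B => by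
    apply DFunLike.ext
    intro v
    show ((A * B : GL (Fin n) ℝ) : Matrix (Fin n) (Fin n) ℝ).mulVec v
      = (A : Matrix (Fin n) (Fin n) ℝ).mulVec ((B : Matrix (Fin n) (Fin n) ℝ).mulVec v)
    simp [Matrix.mulVec_mulVec]
    exact (Matrix.mulVec_mulVec _ _ _).symm

/-- Product topology on a semidirect product. -/
instance semidirectTopology {N H : Type*} [Group N] [Group H] [TopologicalSpace N]
    [TopologicalSpace H] {φ : H →* MulAut N} : TopologicalSpace (N ⋊[φ] H) :=
  TopologicalSpace.induced (fun g => (g.left, g.right)) inferInstance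

/-- Word length with respect to a generating set `S`. -/
def wordLength {G : Type*} [Group G] (S : Set G) (g : G) : ℕ :=
  sInf {m : ℕ | g ∈ S ^ m}

section WordLength

variable {G : Type*} [Group G] {S : Set G}

theorem wordLength_le_of_mem_pow {g : G} {m : ℕ} (h : g ∈ S ^ m) : wordLength S g ≤ m :=
  Nat.sInf_le h

theorem mem_pow_wordLength (hSgen : ∀ g : G, ∃ m : ℕ, g ∈ S ^ m) (g : G) :
    g ∈ S ^ wordLength S g :=
  Nat.sInf_mem (hSgen g)

theorem wordLength_le_iff_mem_pow (hS1 : 1 ∈ S) (hSgen : ∀ g : G, ∃ m : ℕ, g ∈ S ^ m)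
    {g : G} {m : ℕ} : wordLength S g ≤ m ↔ g ∈ S ^ m :=
  ⟨fun h => Set.pow_subset_pow_right hS1 h (mem_pow_wordLength hSgen g),
    wordLength_le_of_mem_pow⟩

theorem wordLength_one : wordLength S (1 : G) = 0 :=
  Nat.le_zero.1 <| wordLength_le_of_mem_pow (pow_zero S ▸ Set.one_mem_one)

theorem wordLength_mul_le (hSgen : ∀ g : G, ∃ m : ℕ, g ∈ S ^ m) (g h : G) :
    wordLength S (g * h) ≤ wordLength S g + wordLength S h :=
  wordLength_le_of_mem_pow <| pow_add S _ _ ▸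
    Set.mul_mem_mul (mem_pow_wordLength hSgen g) (mem_pow_wordLength hSgen h)

theorem wordLength_inv_le (hSsymm : S⁻¹ = S) (hSgen : ∀ g : G, ∃ m : ℕ, g ∈ S ^ m) (g : G) :
    wordLength S g⁻¹ ≤ wordLength S g := by
  apply wordLength_le_of_mem_pow
  have h : g⁻¹ ∈ (S ^ wordLength S g)⁻¹ := Set.inv_mem_inv.2 (mem_pow_wordLength hSgen g)
  rwa [← inv_pow, hSsymm] at h

theorem wordLength_pow_le (hSgen : ∀ g : G, ∃ m : ℕ, g ∈ S ^ m) (g : G) (k : ℕ) :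
    wordLength S (g ^ k) ≤ k * wordLength S g := by
  induction k with
  | zero => simp [wordLength_one]
  | succ k ih =>
    calc wordLength S (g ^ (k + 1)) ≤ wordLength S (g ^ k) + wordLength S g :=
          pow_succ g k ▸ wordLength_mul_le hSgen _ _
      _ ≤ (k + 1) * wordLength S g := by rw [add_mul, one_mul]; gcongr

theorem wordLength_conj_pow_le (hSsymm : S⁻¹ = S) (hSgen : ∀ g : G, ∃ m : ℕ, g ∈ S ^ m)
    (g x : G) (k : ℕ) :
    wordLength S (g ^ k * x * (g ^ k)⁻¹) ≤ wordLength S x + 2 * k * wordLength S g := by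
  have hpow := wordLength_pow_le hSgen g k
  have hinv := wordLength_inv_le hSsymm hSgen (g ^ k)
  have hmul₁ := wordLength_mul_le hSgen (g ^ k * x) (g ^ k)⁻¹
  have hmul₂ := wordLength_mul_le hSgen (g ^ k) x
  linarith

end WordLength

theorem exists_bound_of_subadditive {f : ℝ → ℕ} (hf_add : ∀ s t, f (s + t) ≤ f s + f t)
    (hf_closed : ∀ m : ℕ, IsClosed {t | f t ≤ m}) (R : ℝ) :
    ∃ B : ℕ, ∀ t, |t| ≤ R → f t ≤ B := by
  obtain ⟨m₀, t₀, ht₀⟩ := nonempty_interior_of_iUnion_of_closed hf_closed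
    (Set.iUnion_eq_univ_iff.2 fun t => ⟨f t, le_refl (f t)⟩)
  obtain ⟨ε, hε, hball⟩ := Metric.mem_nhds_iff.1 (mem_interior_iff_mem_nhds.1 ht₀)
  have hnear : ∀ s, |s| < ε → f s ≤ m₀ + f (-t₀) := fun s hs =>
    calc f s = f (t₀ + s + -t₀) := by ring_nf
      _ ≤ f (t₀ + s) + f (-t₀) := hf_add _ _
      _ ≤ m₀ + f (-t₀) := by
        gcongr
        exact hball (by simpa [Real.dist_eq] using hs)
  have hmul : ∀ (q : ℕ) s, f ((q + 1) * s) ≤ (q + 1) * f s := by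
    intro q s
    induction q with
    | zero => simp
    | succ q ih =>
      calc f (((q + 1 : ℕ) + 1) * s) = f ((q + 1) * s + s) := by push_cast; ring_nf
        _ ≤ (q + 1) * f s + f s := (hf_add _ _).trans (by gcongr)
        _ = (q + 1 + 1) * f s := by ring
  obtain ⟨q, hq⟩ := exists_nat_gt (R / ε)
  refine ⟨(q + 1) * (m₀ + f (-t₀)), fun t ht => ?_⟩
  have hq₁ : (0 : ℝ) < q + 1 := by positivity
  have hsmall : |t / (q + 1)| < ε := by
    rw [abs_div, abs_of_pos hq₁, div_lt_iff₀ hq₁]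
    rw [div_lt_iff₀ hε] at hq
    nlinarith
  calc f t = f ((q + 1) * (t / (q + 1))) := by rw [mul_div_cancel₀ _ hq₁.ne']
    _ ≤ (q + 1) * f (t / (q + 1)) := hmul q _
    _ ≤ (q + 1) * (m₀ + f (-t₀)) := by gcongr; exact hnear _ hsmall

theorem exists_wordLength_le_mul_log {G : Type*} [Group G] {S : Set G} (hSsymm : S⁻¹ = S)
    (hSgen : ∀ g : G, ∃ m : ℕ, g ∈ S ^ m) (g : G) (u : ℝ → G) {a : ℝ} (ha : 1 < |a|)
    (hconj : ∀ (k : ℕ) (t : ℝ), g ^ k * u t * (g ^ k)⁻¹ = u (a ^ k * t))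
    {B : ℕ} (hB : ∀ t, |t| ≤ |a| → wordLength S (u t) ≤ B) :
    ∃ C : ℝ, 0 < C ∧ ∀ m : ℕ, 2 ≤ m → (wordLength S (u m) : ℝ) ≤ C * Real.log m := by
  set W := wordLength S g
  have hloga : 0 < Real.log |a| := Real.log_pos ha
  have hlog2 : 0 < Real.log 2 := Real.log_pos one_lt_two
  refine ⟨2 * W / Real.log |a| + B / Real.log 2 + 1, by positivity, fun m hm => ?_⟩
  have hm2 : (2 : ℝ) ≤ m := by exact_mod_cast hm
  have hlogm : Real.log 2 ≤ Real.log m := Real.log_le_log two_pos hm2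
  obtain ⟨k, hk_le, hk_lt⟩ := exists_nat_pow_near (by linarith : (1 : ℝ) ≤ m) ha
  have hak : 0 < |a| ^ k := by positivity
  have hk : (k : ℝ) ≤ Real.log m / Real.log |a| := by
    rw [le_div_iff₀ hloga, ← Real.log_pow]
    exact Real.log_le_log hak hk_le
  have ht : |(m : ℝ) / a ^ k| ≤ |a| := by
    rw [abs_div, abs_pow, Nat.abs_cast, div_le_iff₀ hak, ← pow_succ']
    exact hk_lt.le
  have hum : u m = g ^ k * u (m / a ^ k) * (g ^ k)⁻¹ := by
    rw [hconj, mul_div_cancel₀ _ (pow_ne_zero _ (abs_pos.1 (one_pos.trans ha)))]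
  have hlen : (wordLength S (u m) : ℝ) ≤ B + 2 * k * W := by
    rw [hum]
    exact_mod_cast (wordLength_conj_pow_le hSsymm hSgen g _ k).trans
      (Nat.add_le_add_right (hB _ ht) _)
  have hB' : (B : ℝ) ≤ B / Real.log 2 * Real.log m := by
    rw [div_mul_eq_mul_div, le_div_iff₀ hlog2]
    gcongr
  have hW' : 2 * k * (W : ℝ) ≤ 2 * W / Real.log |a| * Real.log m := by
    rw [div_mul_eq_mul_div, mul_div_assoc, mul_right_comm]
    gcongr
  nlinarith

section SemidirectTopology

variable {N H : Type*} [Group N] [Group H] [TopologicalSpace N] [TopologicalSpace H]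
  {φ : H →* MulAut N}

theorem isEmbedding_semidirectProduct_toProd :
    Topology.IsEmbedding (fun g : N ⋊[φ] H => (g.left, g.right)) :=
  ⟨⟨rfl⟩, fun _ _ h => SemidirectProduct.ext (congrArg Prod.fst h) (congrArg Prod.snd h)⟩

theorem continuous_semidirectProduct_inl : Continuous (SemidirectProduct.inl : N → N ⋊[φ] H) :=
  continuous_induced_rng.2 (continuous_id.prodMk continuous_const)

theorem continuousMul_semidirectProduct [ContinuousMul N] [ContinuousMul H]
    (hφ : Continuous fun p : H × N => φ p.1 p.2) : ContinuousMul (N ⋊[φ] H) := by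
  have hproj : Continuous (fun g : N ⋊[φ] H => (g.left, g.right)) := continuous_induced_dom
  refine ⟨continuous_induced_rng.2 (Continuous.prodMk ?_ ?_)⟩
  · exact (continuous_fst.comp (hproj.comp continuous_fst)).mul
      (hφ.comp ((continuous_snd.comp (hproj.comp continuous_fst)).prodMk
        (continuous_fst.comp (hproj.comp continuous_snd))))
  · exact (continuous_snd.comp (hproj.comp continuous_fst)).mul
      (continuous_snd.comp (hproj.comp continuous_snd))

end SemidirectTopology

theorem IsCompact.pow {M : Type*} [Monoid M] [TopologicalSpace M] [ContinuousMul M] {S : Set M}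
    (hS : IsCompact S) (m : ℕ) : IsCompact (S ^ m) := by
  induction m with
  | zero => simp
  | succ m ih => rw [pow_succ]; exact ih.mul hS

theorem isClosed_setOf_wordLength_le {G : Type*} [Group G] [TopologicalSpace G] [ContinuousMul G]
    [T2Space G] {S : Set G} (hS1 : 1 ∈ S) (hSgen : ∀ g : G, ∃ m : ℕ, g ∈ S ^ m)
    (hS : IsCompact S) (m : ℕ) : IsClosed {g | wordLength S g ≤ m} := by
  simp_rw [wordLength_le_iff_mem_pow hS1 hSgen]
  exact (hS.pow m).isClosed

theorem continuous_glHom_comp_apply {n : ℕ} {Γ : Type*} [Group Γ] [TopologicalSpace Γ]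
    [DiscreteTopology Γ] (ρ : Γ →* GL (Fin n) ℝ) :
    Continuous fun p : Γ × Multiplicative (Fin n → ℝ) => glHom.comp ρ p.1 p.2 :=
  continuous_prod_of_discrete_left.2 fun α =>
    show Continuous fun x : Multiplicative (Fin n → ℝ) =>
      Multiplicative.ofAdd ((ρ α : Matrix (Fin n) (Fin n) ℝ) *ᵥ x.toAdd)
    from continuous_ofAdd.comp (continuous_const.matrix_mulVec continuous_toAdd)

theorem mulVec_pow_of_mulVec_eq_smul {ι R : Type*} [Fintype ι] [DecidableEq ι] [CommSemiring R]
    {A : Matrix ι ι R} {v : ι → R} {c : R} (h : A *ᵥ v = c • v) (k : ℕ) :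
    (A ^ k) *ᵥ v = c ^ k • v := by
  induction k with
  | zero => simp
  | succ k ih => rw [pow_succ, ← mulVec_mulVec, h, mulVec_smul, ih, smul_smul, ← pow_succ']

theorem inr_pow_mul_inl_mul_inv {n : ℕ} {Γ : Type*} [Group Γ] (ρ : Γ →* GL (Fin n) ℝ)
    {γ : Γ} {v : Fin n → ℝ} {lam : ℝ} (heig : (ρ γ : Matrix (Fin n) (Fin n) ℝ) *ᵥ v = lam • v)
    (k : ℕ) (t : ℝ) :
    (SemidirectProduct.inr γ ^ k * SemidirectProduct.inl (Multiplicative.ofAdd (t • v)) *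
        (SemidirectProduct.inr γ ^ k)⁻¹ : Multiplicative (Fin n → ℝ) ⋊[glHom.comp ρ] Γ) =
      SemidirectProduct.inl (Multiplicative.ofAdd ((lam ^ k * t) • v)) := by
  rw [← map_pow, ← map_inv, ← SemidirectProduct.inl_aut]
  congr 1
  show Multiplicative.ofAdd ((ρ (γ ^ k) : Matrix (Fin n) (Fin n) ℝ) *ᵥ (t • v)) = _
  rw [map_pow, Units.val_pow_eq_pow_val, mulVec_smul, mulVec_pow_of_mulVec_eq_smul heig,
    smul_smul, mul_comm]

theorem statement7_general (n : ℕ) (Γ : Type*) [Group Γ] [TopologicalSpace Γ]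
    [DiscreteTopology Γ] (ρ : Γ →* GL (Fin n) ℝ)
    (S : Set (Multiplicative (Fin n → ℝ) ⋊[glHom.comp ρ] Γ))
    (hS1 : (1 : Multiplicative (Fin n → ℝ) ⋊[glHom.comp ρ] Γ) ∈ S)
    (hSsymm : S⁻¹ = S) (hScompact : IsCompact S)
    (hSgen : ∀ g : Multiplicative (Fin n → ℝ) ⋊[glHom.comp ρ] Γ, ∃ m : ℕ, g ∈ S ^ m)
    (γ : Γ) (v : Fin n → ℝ) (lam : ℝ) (hlam : 1 < |lam|)
    (heig : (ρ γ : Matrix (Fin n) (Fin n) ℝ).mulVec v = lam • v) :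
    ∃ C : ℝ, 0 < C ∧ ∀ m : ℕ, 2 ≤ m →
      (wordLength S (SemidirectProduct.inl (Multiplicative.ofAdd (m • v))) : ℝ) ≤
        C * Real.log m := by
  set u : ℝ → Multiplicative (Fin n → ℝ) ⋊[glHom.comp ρ] Γ :=
    fun t => SemidirectProduct.inl (Multiplicative.ofAdd (t • v))
  have hu_cont : Continuous u := continuous_semidirectProduct_inl.comp
    (continuous_ofAdd.comp (continuous_id.smul continuous_const))
  have hu_add : ∀ s t, u (s + t) = u s * u t := fun s t => by
    simp only [u, add_smul, ofAdd_add, map_mul]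
  have : ContinuousMul (Multiplicative (Fin n → ℝ) ⋊[glHom.comp ρ] Γ) :=
    continuousMul_semidirectProduct (continuous_glHom_comp_apply ρ)
  have : T2Space (Multiplicative (Fin n → ℝ) ⋊[glHom.comp ρ] Γ) :=
    isEmbedding_semidirectProduct_toProd.t2Space
  obtain ⟨B, hB⟩ := exists_bound_of_subadditive (f := fun t => wordLength S (u t))
    (fun s t => hu_add s t ▸ wordLength_mul_le hSgen _ _)
    (fun m => (isClosed_setOf_wordLength_le hS1 hSgen hScompact m).preimage hu_cont) |lam|
  obtain ⟨C, hC, hCm⟩ := exists_wordLength_le_mul_log hSsymm hSgen _ u hlam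
    (inr_pow_mul_inl_mul_inv ρ heig) hB
  exact ⟨C, hC, fun m hm => by simpa [u, Nat.cast_smul_eq_nsmul] using hCm m hm⟩

theorem statement7 (n : ℕ) (hn : 1 ≤ n) (Γ : Type*) [Group Γ] [TopologicalSpace Γ]
    [DiscreteTopology Γ] (hΓ : Group.FG Γ) (ρ : Γ →* GL (Fin n) ℝ)
    (S : Set (Multiplicative (Fin n → ℝ) ⋊[glHom.comp ρ] Γ))
    (hS1 : (1 : Multiplicative (Fin n → ℝ) ⋊[glHom.comp ρ] Γ) ∈ S)
    (hSsymm : S⁻¹ = S) (hScompact : IsCompact S)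
    (hSgen : ∀ g : Multiplicative (Fin n → ℝ) ⋊[glHom.comp ρ] Γ, ∃ m : ℕ, g ∈ S ^ m)
    (γ : Γ) (v : Fin n → ℝ) (hv : v ≠ 0) (lam : ℝ) (hlam : 1 < |lam|)
    (heig : (ρ γ : Matrix (Fin n) (Fin n) ℝ).mulVec v = lam • v) :
    ∃ C : ℝ, 0 < C ∧ ∀ m : ℕ, 2 ≤ m →
      (wordLength S (SemidirectProduct.inl (Multiplicative.ofAdd (m • v))) : ℝ) ≤
        C * Real.log m :=
  statement7_general n Γ ρ S hS1 hSsymm hScompact hSgen γ v lam hlam heig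

end
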